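/- Let k be a field and g a 2 × 2 matrix over k with det g = 1. Then the map γ(g) : η(a) + η(b) * J ↦ η(a) + η(g·b) * J is multiplicative for the Zorn product; concretely, for all 2 × 2 matrices a, b, c, d over k: (η(a) + η(g·b) * J) * (η(c) + η(g·d) * J) = η(a·c + (adjugate d)·b) + η(g·(d·a + b·(adjugate c))) * J. -/

import Mathlib

open Matrix

/-- A Zorn vector matrix (split octonion) over `k`. -/
abbrev Zorn (k : Type*) := k × (Fin 3 → k) × (Fin 3 → k) × k

variable {k : Type*} [Field k]

/-- The Zorn product of two Zorn vector matrices. -/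
def zmul (x y : Zorn k) : Zorn k :=
  (x.1 * y.1 + x.2.1 ⬝ᵥ y.2.2.1,
   x.1 • y.2.1 + y.2.2.2 • x.2.1 - x.2.2.1 ⨯₃ y.2.2.1,
   y.1 • x.2.2.1 + x.2.2.2 • y.2.2.1 + x.2.1 ⨯₃ y.2.1,
   x.2.2.2 * y.2.2.2 + x.2.2.1 ⬝ᵥ y.2.1)

/-- The embedding `η` of 2 × 2 matrices into the Zorn vector matrices. -/
def eta (m : Matrix (Fin 2) (Fin 2) k) : Zorn k :=
  (m 0 0, ![m 0 1, 0, 0], ![m 1 0, 0, 0], m 1 1)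

/-- The splitting element `J`. -/
def Jz : Zorn k := (0, ![0, 1, 0], ![0, 1, 0], 0)

/-! Writing `x = η(a) + η(b)J` identifies the Zorn algebra with the Cayley–Dickson double of
`M₂(k)` for the adjugate involution `m ↦ m̄`: `(a + bJ)(c + dJ) = (ac + d̄b) + (da + bc̄)J`.
Replacing `b, d` by `gb, gd` turns `d̄b` into `d̄ ḡ g b = (det g) d̄b` and multiplies the
`J`-component by `g` on the left, so `γ(g)` is multiplicative as soon as `det g = 1`. -/

theorem zmul_eta_Jz (b : Matrix (Fin 2) (Fin 2) k) :
    zmul (eta b) Jz = (0, ![0, b 0 0, -b 1 0], ![0, b 1 1, b 0 1], 0) := by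
  simp only [zmul, eta, Jz, Prod.mk.injEq]
  refine ⟨?_, ?_, ?_, ?_⟩ <;> try ext i; fin_cases i
  all_goals simp [dotProduct, Fin.sum_univ_three, cross_apply]

theorem zmul_eta_add_eta_zmul_Jz (a b c d : Matrix (Fin 2) (Fin 2) k) :
    zmul (eta a + zmul (eta b) Jz) (eta c + zmul (eta d) Jz) =
      eta (a * c + d.adjugate * b) + zmul (eta (d * a + b * c.adjugate)) Jz := by
  simp only [zmul_eta_Jz]
  simp only [zmul, eta, adjugate_fin_two, Matrix.mul_apply, Fin.sum_univ_two,
    Matrix.add_apply, Matrix.of_apply, Prod.mk_add_mk, Prod.mk.injEq]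
  refine ⟨?_, ?_, ?_, ?_⟩ <;> try ext i; fin_cases i
  all_goals
    simp only [dotProduct, Fin.sum_univ_three, cross_apply, Pi.add_apply, Pi.sub_apply,
      Pi.smul_apply, smul_eq_mul, Fin.zero_eta, Fin.mk_one, Fin.reduceFinMk, cons_val, head_cons,
      tail_cons]
    ring

theorem adjugate_mul_mul_cancel_left {n R : Type*} [Fintype n] [DecidableEq n] [CommRing R]
    {g : Matrix n n R} (hg : g.det = 1) (d b : Matrix n n R) :
    (g * d).adjugate * (g * b) = d.adjugate * b := by
  rw [adjugate_mul_distrib, Matrix.mul_assoc, ← Matrix.mul_assoc g.adjugate, adjugate_mul, hg,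
    one_smul, Matrix.one_mul]

/-- For `g` of determinant 1, the map `γ(g) : η(a) + η(b)·J ↦ η(a) + η(g·b)·J`
is multiplicative for the Zorn product. -/
theorem gamma_multiplicative (g : Matrix (Fin 2) (Fin 2) k) (hg : g.det = 1)
    (a b c d : Matrix (Fin 2) (Fin 2) k) :
    zmul (eta a + zmul (eta (g * b)) Jz) (eta c + zmul (eta (g * d)) Jz) =
      eta (a * c + d.adjugate * b) + zmul (eta (g * (d * a + b * c.adjugate))) Jz := by
  rw [zmul_eta_add_eta_zmul_Jz, adjugate_mul_mul_cancel_left hg, Matrix.mul_add,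
    Matrix.mul_assoc, Matrix.mul_assoc]
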